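/- The Gram matrix of the weighted spectral embedding satisfies Y^T Y = W^{-1/2} L_W^+ W^{-1/2} = (I - \pi e^T)^T L^+ (I - \pi e^T); equivalently, y_i^T y_j = (x_i - \bar{x})^T (x_j - \bar{x}), where \bar{x} = X\pi. Thus the weighted embedding equals the regular embedding shifted so the origin is the weighted center of mass. -/

import Mathlib

open Matrix

/-!
By the spectral formulas, `Xᵀ X = L⁺` and `Yᵀ Y = W^{-1/2} L_W⁺ W^{-1/2}`. For a connected
graph `ker L = span e`, so `I - L L⁺` and `I - L⁺ L` are multiples of `e eᵀ`, which
`Q = I - π eᵀ` annihilates from the right since `eᵀ Q = 0`. With this one checks the four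
Penrose equations for `W^{1/2} Qᵀ L⁺ Q W^{1/2}` as a pseudo-inverse of
`L_W = W^{-1/2} L W^{-1/2}`; the symmetry conditions reduce to the symmetry of
`W^{-1/2} Q W^{1/2} = I - √π √πᵀ`, which holds exactly because `π` is proportional to `w`.
Hence `Yᵀ Y = Qᵀ L⁺ Q = (X Q)ᵀ (X Q)`, and the columns of `X Q` are `xᵢ - x̄`.
-/

/-- `P` is the Moore–Penrose pseudo-inverse of `M`. -/
def IsMoorePenroseInverse {n : ℕ} (M P : Matrix (Fin n) (Fin n) ℝ) : Prop :=
  M * P * M = M ∧ P * M * P = P ∧ (M * P)ᵀ = M * P ∧ (P * M)ᵀ = P * M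

section Laplacian

variable {ι : Type*} [Fintype ι] [DecidableEq ι] {A : Matrix ι ι ℝ}

def laplacian (A : Matrix ι ι ℝ) : Matrix ι ι ℝ := diagonal (A *ᵥ 1) - A

lemma isSymm_laplacian (hA : A.IsSymm) : (laplacian A).IsSymm :=
  (isSymm_diagonal _).sub hA

lemma laplacian_mulVec_one : laplacian A *ᵥ 1 = 0 := by
  ext i
  simp only [laplacian, sub_mulVec, Pi.sub_apply, mulVec_diagonal, Pi.one_apply, mul_one,
    sub_self, Pi.zero_apply]

lemma dotProduct_laplacian_mulVec (hA : A.IsSymm) (x : ι → ℝ) :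
    x ⬝ᵥ (laplacian A *ᵥ x) = (∑ i, ∑ j, A i j * (x i - x j) ^ 2) / 2 := by
  have hexpand : x ⬝ᵥ (laplacian A *ᵥ x) = ∑ i, ∑ j, A i j * (x i ^ 2 - x i * x j) := by
    rw [laplacian, sub_mulVec, dotProduct_sub]
    simp only [dotProduct, mulVec_diagonal]
    simp only [mulVec, dotProduct, Pi.one_apply, mul_one, Finset.mul_sum, Finset.sum_mul,
      ← Finset.sum_sub_distrib]
    exact Finset.sum_congr rfl fun i _ => Finset.sum_congr rfl fun j _ => by ring
  have hswap : ∑ i, ∑ j, A i j * (x i ^ 2 - x i * x j)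
      = ∑ i, ∑ j, A i j * (x j ^ 2 - x j * x i) := by
    rw [Finset.sum_comm]
    simp only [hA.apply]
  rw [hexpand, eq_div_iff two_ne_zero, mul_two]
  nth_rewrite 2 [hswap]
  rw [← Finset.sum_add_distrib]
  exact Finset.sum_congr rfl fun i _ => by
    rw [← Finset.sum_add_distrib]
    exact Finset.sum_congr rfl fun j _ => by ring

lemma posSemidef_laplacian (hA : A.IsSymm) (hnonneg : ∀ i j, 0 ≤ A i j) :
    (laplacian A).PosSemidef := by
  refine .of_dotProduct_mulVec_nonneg (isHermitian_iff_isSymm.2 (isSymm_laplacian hA))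
    fun x => ?_
  rw [star_trivial, dotProduct_laplacian_mulVec hA]
  exact div_nonneg (Finset.sum_nonneg fun i _ => Finset.sum_nonneg fun j _ =>
    mul_nonneg (hnonneg i j) (sq_nonneg _)) zero_le_two

lemma eq_of_laplacian_mulVec_eq_zero (hA : A.IsSymm) (hnonneg : ∀ i j, 0 ≤ A i j)
    (hconn : ∀ i j, Relation.ReflTransGen (fun a b => 0 < A a b) i j) {x : ι → ℝ}
    (hx : laplacian A *ᵥ x = 0) (i j : ι) : x i = x j := by
  have hterm_nonneg : ∀ a b, 0 ≤ A a b * (x a - x b) ^ 2 :=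
    fun a b => mul_nonneg (hnonneg a b) (sq_nonneg _)
  have hsum : ∑ a, ∑ b, A a b * (x a - x b) ^ 2 = 0 := by
    have h := dotProduct_laplacian_mulVec hA x
    rw [hx, dotProduct_zero] at h
    linarith
  have hterm : ∀ a b, A a b * (x a - x b) ^ 2 = 0 := fun a b =>
    (Finset.sum_eq_zero_iff_of_nonneg fun b _ => hterm_nonneg a b).1
      ((Finset.sum_eq_zero_iff_of_nonneg fun a _ =>
        Finset.sum_nonneg fun b _ => hterm_nonneg a b).1 hsum a (Finset.mem_univ a))
      b (Finset.mem_univ b)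
  induction hconn i j with
  | refl => rfl
  | tail _ hab ih =>
    rw [ih, ← sub_eq_zero]
    exact eq_zero_of_pow_eq_zero ((mul_eq_zero.1 (hterm _ _)).resolve_left hab.ne')

end Laplacian

section Centering

variable {ι : Type*} [Fintype ι] [DecidableEq ι] {π : ι → ℝ}

lemma one_sub_vecMulVec_mul_self (hπ : ∑ i, π i = 1) :
    (1 - vecMulVec π fun _ : ι => 1) * (1 - vecMulVec π fun _ : ι => 1)
      = 1 - vecMulVec π fun _ : ι => 1 := by
  have hπ' : (fun _ : ι => (1 : ℝ)) ⬝ᵥ π = 1 := by simpa only [dotProduct, one_mul] using hπ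
  rw [sub_mul, mul_sub, mul_sub, vecMulVec_mul_vecMulVec, hπ', one_smul, one_mul, one_mul,
    mul_one, sub_self, sub_zero]

lemma one_sub_vecMulVec_mul_of_vecMul_eq_zero {L : Matrix ι ι ℝ}
    (hL : (fun _ : ι => 1) ᵥ* L = 0) :
    (1 - vecMulVec π fun _ : ι => 1) * L = L := by
  rw [sub_mul, vecMulVec_mul, hL, vecMulVec_zero, one_mul, sub_zero]

lemma mul_one_sub_vecMulVec_transpose_of_mulVec_eq_zero {L : Matrix ι ι ℝ}
    (hL : L *ᵥ (fun _ : ι => 1) = 0) :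
    L * (1 - vecMulVec π fun _ : ι => 1)ᵀ = L := by
  rw [transpose_sub, transpose_one, transpose_vecMulVec, mul_sub, mul_vecMulVec, hL,
    zero_vecMulVec, mul_one, sub_zero]

lemma mul_one_sub_vecMulVec_eq_zero {K : Matrix ι ι ℝ} (hK : ∀ i j k, K i j = K i k)
    (hπ : ∑ i, π i = 1) : K * (1 - vecMulVec π fun _ : ι => 1) = 0 := by
  rw [mul_sub, mul_one, mul_vecMulVec, sub_eq_zero]
  ext i j
  have hrow : (K *ᵥ π) i = K i j := by
    simp only [mulVec, dotProduct, hK i _ j, ← Finset.mul_sum, hπ, mul_one]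
  rw [vecMulVec_apply, hrow, mul_one]

lemma isSymm_diagonal_inv_mul_one_sub_vecMulVec_mul_diagonal {s : ι → ℝ} {c : ℝ}
    (hπ : ∀ i, π i = c * s i ^ 2) :
    (diagonal (fun i => (s i)⁻¹) * (1 - vecMulVec π fun _ : ι => 1) * diagonal s).IsSymm := by
  have hscaled : ∀ i, (s i)⁻¹ * π i = c * s i := fun i => by
    rw [hπ, sq, mul_left_comm, ← mul_assoc (s i)⁻¹, inv_mul_mul_self]
  refine IsSymm.ext fun i j => ?_
  simp only [diagonal_mul, mul_diagonal, Matrix.sub_apply, one_apply, vecMulVec_apply, mul_one]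
  by_cases h : i = j
  · rw [h]
  · rw [if_neg h, if_neg (Ne.symm h), zero_sub, zero_sub, mul_neg, mul_neg, hscaled, hscaled]
    ring

omit [DecidableEq ι] in
lemma apply_eq_apply_of_isSymm_of_mul_eq_zero {L K : Matrix ι ι ℝ}
    (hker : ∀ x, L *ᵥ x = 0 → ∀ i j, x i = x j) (hK : K.IsSymm) (hLK : L * K = 0)
    (i j k : ι) : K i j = K i k := by
  have hcol : L *ᵥ (fun a => K a i) = 0 := funext fun a => congrFun (congrFun hLK a) i
  rw [← hK.apply i j, ← hK.apply i k]
  exact hker _ hcol j k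

end Centering

section SpectralEmbedding

variable {ι : Type*} [Fintype ι] [DecidableEq ι] {U : Matrix ι ι ℝ} {d : ι → ℝ}

/-- `X = √Λ⁺ Uᵀ`: for `d ≥ 0`, the junk value `0⁻¹ = 0` makes `(d i)⁻¹` the pseudo-inverse `Λ⁺`. -/
noncomputable def spectralEmbedding (U : Matrix ι ι ℝ) (d : ι → ℝ) : Matrix ι ι ℝ :=
  diagonal (fun i => Real.sqrt (d i)⁻¹) * Uᵀ

lemma nonneg_of_posSemidef_mul_diagonal_mul_transpose (hU : Uᵀ * U = 1)
    (h : (U * diagonal d * Uᵀ).PosSemidef) (i : ι) : 0 ≤ d i := by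
  have hconj : Uᵀ * (U * diagonal d * Uᵀ) * U = diagonal d := by
    rw [← mul_assoc, ← mul_assoc, hU, one_mul, mul_assoc, hU, mul_one]
  have hd := h.conjTranspose_mul_mul_same U
  rw [conjTranspose_eq_transpose_of_trivial, hconj, posSemidef_diagonal_iff] at hd
  exact hd i

lemma transpose_spectralEmbedding_mul_self (hd : ∀ i, 0 ≤ d i) :
    (spectralEmbedding U d)ᵀ * spectralEmbedding U d = U * diagonal d⁻¹ * Uᵀ := by
  have hsq : diagonal (fun i => Real.sqrt (d i)⁻¹) * diagonal (fun i => Real.sqrt (d i)⁻¹)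
      = diagonal d⁻¹ := by
    rw [diagonal_mul_diagonal]
    exact congrArg diagonal (funext fun i => Real.mul_self_sqrt (inv_nonneg.2 (hd i)))
  rw [spectralEmbedding, transpose_mul, transpose_transpose, diagonal_transpose, mul_assoc,
    ← mul_assoc (diagonal _), hsq, mul_assoc]

end SpectralEmbedding

namespace IsMoorePenroseInverse

variable {n : ℕ} {L P : Matrix (Fin n) (Fin n) ℝ}

theorem unique {P' : Matrix (Fin n) (Fin n) ℝ} (hP : IsMoorePenroseInverse L P)
    (hP' : IsMoorePenroseInverse L P') : P = P' := by
  obtain ⟨hP1, hP2, hP3, hP4⟩ := hP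
  obtain ⟨hP'1, hP'2, hP'3, hP'4⟩ := hP'
  have hleft : L * P = L * P' :=
    calc L * P = (L * P' * L * P)ᵀ := by rw [hP'1, hP3]
      _ = (L * P)ᵀ * (L * P')ᵀ := by rw [mul_assoc (L * P'), transpose_mul]
      _ = L * P' := by rw [hP3, hP'3, ← mul_assoc, hP1]
  have hright : P * L = P' * L :=
    calc P * L = (P * (L * P' * L))ᵀ := by rw [hP'1, hP4]
      _ = (P' * L)ᵀ * (P * L)ᵀ := by rw [← transpose_mul]; simp only [mul_assoc]
      _ = P' * L := by rw [hP'4, hP4, mul_assoc, ← mul_assoc L, hP1]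
  calc P = P * L * P := hP2.symm
    _ = P' * L * P' := by rw [hright, mul_assoc, hleft, ← mul_assoc]
    _ = P' := hP'2

theorem conj {S Si Q : Matrix (Fin n) (Fin n) ℝ} (h : IsMoorePenroseInverse L P)
    (hSSi : S * Si = 1) (hS : S.IsSymm) (hSi : Si.IsSymm)
    (hQL : Q * L = L) (hLQ : L * Qᵀ = L) (hQQ : Q * Q = Q)
    (hLPQ : L * P * Q = Q) (hPLQ : P * L * Q = Q) (hR : (Si * Q * S).IsSymm) :
    IsMoorePenroseInverse (Si * L * Si) (S * Qᵀ * P * Q * S) := by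
  have hSiS : Si * S = 1 := mul_eq_one_comm.1 hSSi
  have hQPL : Qᵀ * (P * L) = Qᵀ := by rw [← h.2.2.2, ← transpose_mul, hPLQ]
  have hRt : S * Qᵀ * Si = Si * Q * S := by
    rw [← hR.eq, transpose_mul, transpose_mul, hS.eq, hSi.eq, mul_assoc]
  have hLM : Si * L * Si * (S * Qᵀ * P * Q * S) = Si * Q * S :=
    calc Si * L * Si * (S * Qᵀ * P * Q * S) = Si * L * (Si * S) * Qᵀ * P * Q * S := by
          simp only [mul_assoc]
      _ = Si * (L * Qᵀ * P * Q) * S := by rw [hSiS, mul_one]; simp only [mul_assoc]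
      _ = Si * Q * S := by rw [hLQ, hLPQ]
  have hML : S * Qᵀ * P * Q * S * (Si * L * Si) = Si * Q * S :=
    calc S * Qᵀ * P * Q * S * (Si * L * Si) = S * Qᵀ * P * Q * (S * Si) * L * Si := by
          simp only [mul_assoc]
      _ = S * (Qᵀ * (P * (Q * L))) * Si := by rw [hSSi, mul_one]; simp only [mul_assoc]
      _ = Si * Q * S := by rw [hQL, hQPL, hRt]
  refine ⟨?_, ?_, by rw [hLM, hR.eq], by rw [hML, hR.eq]⟩
  · calc Si * L * Si * (S * Qᵀ * P * Q * S) * (Si * L * Si)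
        = Si * (Q * (S * Si) * L) * Si := by rw [hLM]; simp only [mul_assoc]
      _ = Si * L * Si := by rw [hSSi, mul_one, hQL]
  · calc S * Qᵀ * P * Q * S * (Si * L * Si) * (S * Qᵀ * P * Q * S)
        = S * Qᵀ * P * (Q * (S * Si) * Q) * S := by
          rw [mul_assoc, hLM]; simp only [mul_assoc]
      _ = S * Qᵀ * P * Q * S := by rw [hSSi, mul_one, hQQ]

theorem mul_diagonal_mul_transpose {U : Matrix (Fin n) (Fin n) ℝ} (hU : Uᵀ * U = 1)
    (d : Fin n → ℝ) : IsMoorePenroseInverse (U * diagonal d * Uᵀ) (U * diagonal d⁻¹ * Uᵀ) := by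
  have hmul : ∀ a b : Fin n → ℝ,
      U * diagonal a * Uᵀ * (U * diagonal b * Uᵀ) = U * diagonal (a * b) * Uᵀ := fun a b =>
    calc U * diagonal a * Uᵀ * (U * diagonal b * Uᵀ)
        = U * (diagonal a * (Uᵀ * U) * diagonal b) * Uᵀ := by simp only [mul_assoc]
      _ = U * diagonal (a * b) * Uᵀ := by rw [hU, mul_one, diagonal_mul_diagonal]; rfl
  have hsymm : ∀ a, (U * diagonal a * Uᵀ)ᵀ = U * diagonal a * Uᵀ := fun a => by
    rw [transpose_mul, transpose_mul, transpose_transpose, diagonal_transpose, mul_assoc]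
  refine ⟨?_, ?_, by rw [hmul, hsymm], by rw [hmul, hsymm]⟩
  · rw [hmul, hmul]
    exact congrArg (U * diagonal · * Uᵀ) (funext fun i => mul_inv_mul_cancel (d i))
  · rw [hmul, hmul]
    exact congrArg (U * diagonal · * Uᵀ)
      (funext fun i => by simpa using mul_inv_mul_cancel (d i)⁻¹)

theorem mul_mul_one_sub_vecMulVec_eq {π : Fin n → ℝ} (h : IsMoorePenroseInverse L P)
    (hL : L.IsSymm) (hker : ∀ x, L *ᵥ x = 0 → ∀ i j, x i = x j) (hπ : ∑ i, π i = 1) :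
    L * P * (1 - vecMulVec π fun _ : Fin n => 1) = (1 - vecMulVec π fun _ : Fin n => 1) ∧
      P * L * (1 - vecMulVec π fun _ : Fin n => 1) = (1 - vecMulVec π fun _ : Fin n => 1) := by
  have hfix : ∀ K : Matrix (Fin n) (Fin n) ℝ, K.IsSymm → L * K = 0 →
      (1 - K) * (1 - vecMulVec π fun _ : Fin n => 1) = 1 - vecMulVec π fun _ : Fin n => 1 :=
    fun K hK hLK => by
      rw [sub_mul, one_mul, sub_eq_self]
      exact mul_one_sub_vecMulVec_eq_zero (apply_eq_apply_of_isSymm_of_mul_eq_zero hker hK hLK) hπ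
  constructor
  · have hK : (1 - L * P).IsSymm := by
      rw [IsSymm, transpose_sub, transpose_one, h.2.2.1]
    have hLK : L * (1 - L * P) = 0 := by
      rw [← transpose_transpose (L * _), transpose_mul, hK.eq, hL.eq, sub_mul, one_mul, h.1,
        sub_self, transpose_zero]
    simpa using hfix _ hK hLK
  · have hK : (1 - P * L).IsSymm := by
      rw [IsSymm, transpose_sub, transpose_one, h.2.2.2]
    simpa using hfix _ hK (by rw [mul_sub, mul_one, ← mul_assoc, h.1, sub_self])

theorem conj_diagonal {s π : Fin n → ℝ} {c : ℝ} (h : IsMoorePenroseInverse L P) (hL : L.IsSymm)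
    (hL1 : L *ᵥ 1 = 0) (hker : ∀ x, L *ᵥ x = 0 → ∀ i j, x i = x j) (hs : ∀ i, s i ≠ 0)
    (hπ : ∀ i, π i = c * s i ^ 2) (hπ1 : ∑ i, π i = 1) :
    IsMoorePenroseInverse (diagonal (fun i => (s i)⁻¹) * L * diagonal (fun i => (s i)⁻¹))
      (diagonal s * (1 - vecMulVec π fun _ : Fin n => 1)ᵀ * P *
        (1 - vecMulVec π fun _ : Fin n => 1) * diagonal s) := by
  have hSSi : diagonal s * diagonal (fun i => (s i)⁻¹) = 1 := by
    rw [diagonal_mul_diagonal, ← diagonal_one]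
    exact congrArg diagonal (funext fun i => mul_inv_cancel₀ (hs i))
  have h1L : (fun _ : Fin n => 1) ᵥ* L = 0 := by rw [← mulVec_transpose, hL.eq]; exact hL1
  obtain ⟨hLPQ, hPLQ⟩ := h.mul_mul_one_sub_vecMulVec_eq hL hker hπ1
  exact h.conj hSSi (isSymm_diagonal _) (isSymm_diagonal _)
    (one_sub_vecMulVec_mul_of_vecMul_eq_zero h1L)
    (mul_one_sub_vecMulVec_transpose_of_mulVec_eq_zero hL1) (one_sub_vecMulVec_mul_self hπ1)
    hLPQ hPLQ (isSymm_diagonal_inv_mul_one_sub_vecMulVec_mul_diagonal hπ)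

theorem diagonal_inv_mul_mul_diagonal_inv_eq {s π : Fin n → ℝ} {c : ℝ}
    {PW : Matrix (Fin n) (Fin n) ℝ} (h : IsMoorePenroseInverse L P)
    (hW : IsMoorePenroseInverse
      (diagonal (fun i => (s i)⁻¹) * L * diagonal (fun i => (s i)⁻¹)) PW)
    (hL : L.IsSymm) (hL1 : L *ᵥ 1 = 0) (hker : ∀ x, L *ᵥ x = 0 → ∀ i j, x i = x j)
    (hs : ∀ i, s i ≠ 0) (hπ : ∀ i, π i = c * s i ^ 2) (hπ1 : ∑ i, π i = 1) :
    diagonal (fun i => (s i)⁻¹) * PW * diagonal (fun i => (s i)⁻¹)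
      = (1 - vecMulVec π fun _ : Fin n => 1)ᵀ * P * (1 - vecMulVec π fun _ : Fin n => 1) := by
  have hSiS : diagonal (fun i => (s i)⁻¹) * diagonal s = 1 := by
    rw [diagonal_mul_diagonal, ← diagonal_one]
    exact congrArg diagonal (funext fun i => inv_mul_cancel₀ (hs i))
  rw [hW.unique (h.conj_diagonal hL hL1 hker hs hπ hπ1)]
  simp only [mul_assoc]
  rw [← mul_assoc (diagonal s), mul_eq_one_comm.1 hSiS, mul_one]
  simp only [← mul_assoc]
  rw [hSiS, one_mul]

theorem eq_transpose_spectralEmbedding_mul_self {M U : Matrix (Fin n) (Fin n) ℝ}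
    {d : Fin n → ℝ} (h : IsMoorePenroseInverse M P) (hM : M.PosSemidef) (hU : Uᵀ * U = 1)
    (hdec : M = U * diagonal d * Uᵀ) : P = (spectralEmbedding U d)ᵀ * spectralEmbedding U d := by
  subst hdec
  rw [transpose_spectralEmbedding_mul_self
    (nonneg_of_posSemidef_mul_diagonal_mul_transpose hU hM)]
  exact h.unique (mul_diagonal_mul_transpose hU d)

end IsMoorePenroseInverse

theorem weighted_spectral_embedding_gram_general
    (n : ℕ) (hn : 0 < n) (A : Matrix (Fin n) (Fin n) ℝ)
    (hsymm : A.IsSymm) (hnonneg : ∀ i j, 0 ≤ A i j)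
    (hconn : ∀ i j : Fin n, Relation.ReflTransGen (fun a b => 0 < A a b) i j)
    (w : Fin n → ℝ) (hw : ∀ i, 0 < w i)
    (π : Fin n → ℝ) (hπ : π = fun i => w i / ∑ k, w k)
    (L : Matrix (Fin n) (Fin n) ℝ)
    (hL : L = Matrix.diagonal (A.mulVec 1) - A)
    (LW : Matrix (Fin n) (Fin n) ℝ)
    (hLW : LW = Matrix.diagonal (fun i => (Real.sqrt (w i))⁻¹) * L *
      Matrix.diagonal (fun i => (Real.sqrt (w i))⁻¹))
    (Lp : Matrix (Fin n) (Fin n) ℝ) (hLp : IsMoorePenroseInverse L Lp)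
    (LWp : Matrix (Fin n) (Fin n) ℝ) (hLWp : IsMoorePenroseInverse LW LWp)
    (U : Matrix (Fin n) (Fin n) ℝ) (hU : Uᵀ * U = 1)
    (lam : Fin n → ℝ) (hdec : L = U * Matrix.diagonal lam * Uᵀ)
    (X : Matrix (Fin n) (Fin n) ℝ)
    (hX : X = Matrix.diagonal (fun i => Real.sqrt (lam i)⁻¹) * Uᵀ)
    (Uh : Matrix (Fin n) (Fin n) ℝ) (hUh : Uhᵀ * Uh = 1)
    (mu : Fin n → ℝ) (hdecW : LW = Uh * Matrix.diagonal mu * Uhᵀ)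
    (Y : Matrix (Fin n) (Fin n) ℝ)
    (hY : Y = Matrix.diagonal (fun i => Real.sqrt (mu i)⁻¹) * Uhᵀ *
      Matrix.diagonal (fun i => (Real.sqrt (w i))⁻¹))
    (xbar : Fin n → ℝ) (hxbar : xbar = X.mulVec π) :
    Yᵀ * Y = Matrix.diagonal (fun i => (Real.sqrt (w i))⁻¹) * LWp *
        Matrix.diagonal (fun i => (Real.sqrt (w i))⁻¹) ∧
    Yᵀ * Y = (1 - Matrix.vecMulVec π (fun _ => (1 : ℝ)))ᵀ * Lp *
        (1 - Matrix.vecMulVec π (fun _ => (1 : ℝ))) ∧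
    ∀ i j, (∑ k, Y k i * Y k j) = ∑ k, (X k i - xbar k) * (X k j - xbar k) := by
  set Si : Matrix (Fin n) (Fin n) ℝ := diagonal fun i => (Real.sqrt (w i))⁻¹
  set Q : Matrix (Fin n) (Fin n) ℝ := 1 - vecMulVec π fun _ => 1
  have hπ1 : ∑ i, π i = 1 := by
    rw [hπ, ← Finset.sum_div,
      div_self (Finset.sum_pos (fun i _ => hw i) ⟨⟨0, hn⟩, Finset.mem_univ _⟩).ne']
  have hπsq : ∀ i, π i = (∑ k, w k)⁻¹ * Real.sqrt (w i) ^ 2 := fun i => by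
    rw [hπ, Real.sq_sqrt (hw i).le, inv_mul_eq_div]
  have hLpsd : L.PosSemidef := hL ▸ posSemidef_laplacian hsymm hnonneg
  have hLWpsd : LW.PosSemidef := by
    simpa [hLW, Si] using hLpsd.conjTranspose_mul_mul_same Si
  have hXX : Xᵀ * X = Lp := by
    rw [hLp.eq_transpose_spectralEmbedding_mul_self hLpsd hU hdec, hX]; rfl
  have hYY : Yᵀ * Y = Si * LWp * Si := by
    rw [hLWp.eq_transpose_spectralEmbedding_mul_self hLWpsd hUh hdecW, hY]
    change (spectralEmbedding Uh mu * Si)ᵀ * (spectralEmbedding Uh mu * Si) = _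
    rw [transpose_mul, show Siᵀ = Si from diagonal_transpose _]
    simp only [mul_assoc]
  have hcenter : Si * LWp * Si = Qᵀ * Lp * Q :=
    hLp.diagonal_inv_mul_mul_diagonal_inv_eq (hLW ▸ hLWp) (hL ▸ isSymm_laplacian hsymm)
      (hL ▸ laplacian_mulVec_one)
      (fun x hx => eq_of_laplacian_mulVec_eq_zero hsymm hnonneg hconn (by rwa [hL] at hx))
      (fun i => (Real.sqrt_pos.2 (hw i)).ne') hπsq hπ1
  refine ⟨hYY, hYY.trans hcenter, fun i j => ?_⟩
  have hXQ : X * Q = X - vecMulVec xbar fun _ => 1 := by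
    rw [hxbar, mul_sub, mul_one, mul_vecMulVec]
  calc ∑ k, Y k i * Y k j = ((X * Q)ᵀ * (X * Q)) i j := by
        rw [transpose_mul, mul_assoc, ← mul_assoc Xᵀ, hXX, ← mul_assoc, ← hcenter, ← hYY]; rfl
    _ = ∑ k, (X k i - xbar k) * (X k j - xbar k) := by
        rw [hXQ]; simp [mul_apply, vecMulVec_apply]

/-- The Gram matrix of the weighted spectral embedding is
`Yᵀ Y = W^{-1/2} L_W⁺ W^{-1/2} = (I - π eᵀ)ᵀ L⁺ (I - π eᵀ)`; equivalently
`yᵢᵀ yⱼ = (xᵢ - x̄)ᵀ (xⱼ - x̄)` with `x̄ = X π`: the weighted embedding is the regular one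
shifted so that the origin is the weighted center of mass. -/
theorem weighted_spectral_embedding_gram
    (n : ℕ) (hn : 0 < n) (A : Matrix (Fin n) (Fin n) ℝ)
    (hsymm : A.IsSymm) (hnonneg : ∀ i j, 0 ≤ A i j) (hdiag : ∀ i, A i i = 0)
    (hconn : ∀ i j : Fin n, Relation.ReflTransGen (fun a b => 0 < A a b) i j)
    (w : Fin n → ℝ) (hw : ∀ i, 0 < w i)
    (π : Fin n → ℝ) (hπ : π = fun i => w i / ∑ k, w k)
    (L : Matrix (Fin n) (Fin n) ℝ)
    (hL : L = Matrix.diagonal (A.mulVec 1) - A)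
    (LW : Matrix (Fin n) (Fin n) ℝ)
    (hLW : LW = Matrix.diagonal (fun i => (Real.sqrt (w i))⁻¹) * L *
      Matrix.diagonal (fun i => (Real.sqrt (w i))⁻¹))
    (Lp : Matrix (Fin n) (Fin n) ℝ) (hLp : IsMoorePenroseInverse L Lp)
    (LWp : Matrix (Fin n) (Fin n) ℝ) (hLWp : IsMoorePenroseInverse LW LWp)
    (U : Matrix (Fin n) (Fin n) ℝ) (hU : Uᵀ * U = 1)
    (lam : Fin n → ℝ) (hdec : L = U * Matrix.diagonal lam * Uᵀ)
    (hlam0 : lam ⟨0, hn⟩ = 0) (hu1 : ∀ i, U i ⟨0, hn⟩ = 1 / Real.sqrt n)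
    (X : Matrix (Fin n) (Fin n) ℝ)
    (hX : X = Matrix.diagonal (fun i => Real.sqrt (lam i)⁻¹) * Uᵀ)
    (Uh : Matrix (Fin n) (Fin n) ℝ) (hUh : Uhᵀ * Uh = 1)
    (mu : Fin n → ℝ) (hdecW : LW = Uh * Matrix.diagonal mu * Uhᵀ)
    (hmu0 : mu ⟨0, hn⟩ = 0) (huh1 : ∀ i, Uh i ⟨0, hn⟩ = Real.sqrt (w i / ∑ k, w k))
    (Y : Matrix (Fin n) (Fin n) ℝ)
    (hY : Y = Matrix.diagonal (fun i => Real.sqrt (mu i)⁻¹) * Uhᵀ *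
      Matrix.diagonal (fun i => (Real.sqrt (w i))⁻¹))
    (xbar : Fin n → ℝ) (hxbar : xbar = X.mulVec π) :
    Yᵀ * Y = Matrix.diagonal (fun i => (Real.sqrt (w i))⁻¹) * LWp *
        Matrix.diagonal (fun i => (Real.sqrt (w i))⁻¹) ∧
    Yᵀ * Y = (1 - Matrix.vecMulVec π (fun _ => (1 : ℝ)))ᵀ * Lp *
        (1 - Matrix.vecMulVec π (fun _ => (1 : ℝ))) ∧
    ∀ i j, (∑ k, Y k i * Y k j) = ∑ k, (X k i - xbar k) * (X k j - xbar k) :=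
  weighted_spectral_embedding_gram_general n hn A hsymm hnonneg hconn w hw π hπ L hL LW hLW Lp hLp
    LWp hLWp U hU lam hdec X hX Uh hUh mu hdecW Y hY xbar hxbar
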